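/- arXiv:2401.11953 — 2 statements merged into one kernel-verified Lean document; each statement's English description precedes it below -/
import Mathlib

section
/- Let u : I × ℝ² → ℝ be a classical solution of the rescaled Camassa–Holm–Kadomtsev–Petviashvili equation L u_t + κ u_{xx} + (3 u u_x − 2 u_x u_{xx} − u u_{xxx})_x + u_{yy} = 0, which is the unique solution with initial datum u(0,·,·) = u₀, and which is nontrivial in the sense that L∂_x u is not identically zero. If u is x-symmetric with axis of symmetry λ ∈ C¹(ℝ), then u is steady in the x-direction with speed c = λ̇(0); that is, u(t,x,y) = u₀(x − λ̇(0) t, y) for all (t,x,y) ∈ I × ℝ². -/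
open Set

/-- Partial derivative in the time variable `t` of a function `u(t,x,y)`. -/
noncomputable def pt (u : ℝ → ℝ → ℝ → ℝ) : ℝ → ℝ → ℝ → ℝ :=
  fun t x y => deriv (fun s => u s x y) t

/-- Partial derivative in the horizontal variable `x` of a function `u(t,x,y)`. -/
noncomputable def px (u : ℝ → ℝ → ℝ → ℝ) : ℝ → ℝ → ℝ → ℝ :=
  fun t x y => deriv (fun s => u t s y) x

/-- Partial derivative in the transversal variable `y` of a function `u(t,x,y)`. -/
noncomputable def py (u : ℝ → ℝ → ℝ → ℝ) : ℝ → ℝ → ℝ → ℝ :=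
  fun t x y => deriv (fun s => u t x s) y

/-- The operator `L f = ∂ₓ(1 - ∂ₓ²) f = fₓ - fₓₓₓ`, acting in the `x`-variable. -/
noncomputable def Lx (u : ℝ → ℝ → ℝ → ℝ) : ℝ → ℝ → ℝ → ℝ :=
  fun t x y => px u t x y - px (px (px u)) t x y

/-- The nonlinearity `3 u uₓ - 2 uₓ uₓₓ - u uₓₓₓ` of the CH-KP equation. -/
noncomputable def chkpNonlin (u : ℝ → ℝ → ℝ → ℝ) : ℝ → ℝ → ℝ → ℝ :=
  fun t x y =>
    3 * u t x y * px u t x y - 2 * px u t x y * px (px u) t x y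
      - u t x y * px (px (px u)) t x y

/-- `u` is a (classical) solution on `[0,T] × ℝ²` of the rescaled CH-KP equation
`L uₜ + κ uₓₓ + (3 u uₓ - 2 uₓ uₓₓ - u uₓₓₓ)ₓ + u_yy = 0`. -/
def IsClassicalSolCHKP (T κ : ℝ) (u : ℝ → ℝ → ℝ → ℝ) : Prop :=
  ∀ t ∈ Icc (0:ℝ) T, ∀ x y : ℝ,
    Lx (pt u) t x y + κ * px (px u) t x y + px (chkpNonlin u) t x y
      + py (py u) t x y = 0


private lemma contDiffInf_diff {E F : Type*} [NormedAddCommGroup E] [NormedSpace ℝ E]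
    [NormedAddCommGroup F] [NormedSpace ℝ F] {f : E → F}
    (h : ContDiff ℝ (⊤ : ℕ∞) f) : Differentiable ℝ f :=
  h.differentiable (by simp)

private lemma deriv_reflect_smul {f g : ℝ → ℝ} {a ε : ℝ} (h : ∀ x, f x = ε * g (a - x)) (x : ℝ) :
    deriv f x = -ε * deriv g (a - x) := by
  have hf : f = fun x => ε * g (a - x) := funext h
  rw [hf, deriv_const_mul_field, deriv_comp_const_sub]; ring

/-- An `x`-symmetric classical solution of the CH-KP equation, which is the unique
solution with its initial datum and has `L ∂ₓ u` not identically zero, is steady in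
the `x`-direction with speed `λ̇(0)`. -/
theorem chkp_xSymmetric_implies_steady
    (T : ℝ) (hT : 0 < T) (κ : ℝ)
    (u : ℝ → ℝ → ℝ → ℝ) (u₀ : ℝ → ℝ → ℝ)
    (hu : ContDiff ℝ (⊤ : ℕ∞) (fun p : ℝ × ℝ × ℝ => u p.1 p.2.1 p.2.2))
    (heq : IsClassicalSolCHKP T κ u)
    (hinit : ∀ x y : ℝ, u 0 x y = u₀ x y)
    (huniq : ∀ v : ℝ → ℝ → ℝ → ℝ,
      ContDiff ℝ (⊤ : ℕ∞) (fun p : ℝ × ℝ × ℝ => v p.1 p.2.1 p.2.2) →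
      IsClassicalSolCHKP T κ v → (∀ x y : ℝ, v 0 x y = u₀ x y) →
      ∀ t ∈ Icc (0:ℝ) T, ∀ x y : ℝ, v t x y = u t x y)
    (hnontriv : ¬ (∀ t ∈ Icc (0:ℝ) T, ∀ x y : ℝ, Lx (px u) t x y = 0))
    (lam : ℝ → ℝ) (hlam : ContDiff ℝ 1 lam)
    (hsym : ∀ t ∈ Icc (0:ℝ) T, ∀ x y : ℝ, u t x y = u t (2 * lam t - x) y) :
    ∀ t ∈ Icc (0:ℝ) T, ∀ x y : ℝ, u t x y = u₀ (x - deriv lam 0 * t) y := by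
  have h0T : (0:ℝ) ∈ Icc (0:ℝ) T := ⟨le_rfl, hT.le⟩
  set c : ℝ := deriv lam 0 with hc
  set U3 : ℝ × ℝ × ℝ → ℝ := fun p => u p.1 p.2.1 p.2.2 with hU3def
  have hU3 : ContDiff ℝ (⊤ : ℕ∞) U3 := hu
  have hU3i : ContDiff ℝ (⊤ : ℕ∞) U3 := hU3.of_le (mod_cast le_top)
  have hdiff : Differentiable ℝ U3 := hU3.differentiable (by simp)
  -- partial derivatives as directional fderiv's
  have hAt : ∀ p : ℝ × ℝ × ℝ, HasDerivAt (fun s => u s p.2.1 p.2.2)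
      (fderiv ℝ U3 p ((1:ℝ), (0:ℝ), (0:ℝ))) p.1 := by
    intro p
    have h1 := (hdiff p).hasFDerivAt
    have h2 : HasDerivAt (fun s : ℝ => ((s, p.2.1, p.2.2) : ℝ × ℝ × ℝ))
        (((1:ℝ), (0:ℝ), (0:ℝ))) p.1 :=
      (hasDerivAt_id p.1).prodMk ((hasDerivAt_const p.1 p.2.1).prodMk (hasDerivAt_const p.1 p.2.2))
    exact h1.comp_hasDerivAt p.1 h2
  have hAx : ∀ p : ℝ × ℝ × ℝ, HasDerivAt (fun s => u p.1 s p.2.2)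
      (fderiv ℝ U3 p ((0:ℝ), (1:ℝ), (0:ℝ))) p.2.1 := by
    intro p
    have h1 := (hdiff p).hasFDerivAt
    have h2 : HasDerivAt (fun s : ℝ => ((p.1, s, p.2.2) : ℝ × ℝ × ℝ))
        (((0:ℝ), (1:ℝ), (0:ℝ))) p.2.1 :=
      (hasDerivAt_const p.2.1 p.1).prodMk ((hasDerivAt_id p.2.1).prodMk (hasDerivAt_const p.2.1 p.2.2))
    exact h1.comp_hasDerivAt p.2.1 h2
  have hpt : ∀ t x y : ℝ, pt u t x y = fderiv ℝ U3 (t, x, y) ((1:ℝ), (0:ℝ), (0:ℝ)) :=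
    fun t x y => (hAt (t, x, y)).deriv
  have hpx : ∀ t x y : ℝ, px u t x y = fderiv ℝ U3 (t, x, y) ((0:ℝ), (1:ℝ), (0:ℝ)) :=
    fun t x y => (hAx (t, x, y)).deriv
  -- smoothness of the slices
  have hxsm : ∀ t y : ℝ, ContDiff ℝ (⊤ : ℕ∞) (fun x => u t x y) := by
    intro t y
    exact hU3i.comp (contDiff_const.prodMk (contDiff_id.prodMk contDiff_const))
  have hFsm : ∀ t y : ℝ, ContDiff ℝ (⊤ : ℕ∞) (fun x => pt u t x y) := by
    intro t y
    have h1 : ContDiff ℝ (⊤ : ℕ∞) (fun p : ℝ × ℝ × ℝ => fderiv ℝ U3 p) :=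
      hU3.fderiv_right (mod_cast le_top)
    have h2 : ContDiff ℝ (⊤ : ℕ∞) (fun x : ℝ => ((t, x, y) : ℝ × ℝ × ℝ)) :=
      contDiff_const.prodMk (contDiff_id.prodMk contDiff_const)
    have h3 : ContDiff ℝ (⊤ : ℕ∞) (fun x : ℝ => fderiv ℝ U3 (t, x, y) ((1:ℝ),(0:ℝ),(0:ℝ))) :=
      (h1.comp h2).clm_apply contDiff_const
    have he : (fun x => pt u t x y) = fun x : ℝ => fderiv ℝ U3 (t, x, y) ((1:ℝ),(0:ℝ),(0:ℝ)) :=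
      funext fun x => hpt t x y
    rw [he]; exact h3
  -- the key identity: L ∂ₜ u = -c · L ∂ₓ u at time 0
  have hstar : ∀ x y : ℝ, Lx (pt u) 0 x y = -c * Lx (px u) 0 x y := by
    intro x₀ y
    set U : ℝ → ℝ := fun x => u 0 x y with hUdef
    set F : ℝ → ℝ := fun x => pt u 0 x y with hFdef
    have hUsm : ContDiff ℝ (⊤ : ℕ∞) U := hxsm 0 y
    have hU1sm : ContDiff ℝ (⊤ : ℕ∞) (deriv U) := (contDiff_infty_iff_deriv.mp hUsm).2
    have hU2sm : ContDiff ℝ (⊤ : ℕ∞) (deriv (deriv U)) := (contDiff_infty_iff_deriv.mp hU1sm).2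
    have hU3sm : ContDiff ℝ (⊤ : ℕ∞) (deriv (deriv (deriv U))) :=
      (contDiff_infty_iff_deriv.mp hU2sm).2
    have hU1d : Differentiable ℝ (deriv U) := contDiffInf_diff hU1sm
    have hU2d : Differentiable ℝ (deriv (deriv U)) := contDiffInf_diff hU2sm
    have hU3d : Differentiable ℝ (deriv (deriv (deriv U))) := contDiffInf_diff hU3sm
    have hFsm0 : ContDiff ℝ (⊤ : ℕ∞) F := hFsm 0 y
    have hF1sm : ContDiff ℝ (⊤ : ℕ∞) (deriv F) := (contDiff_infty_iff_deriv.mp hFsm0).2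
    have hFd : Differentiable ℝ F := contDiffInf_diff hFsm0
    have hF1d : Differentiable ℝ (deriv F) := contDiffInf_diff hF1sm
    -- spatial symmetry of the time-0 slice
    have hs0 : ∀ z : ℝ, U z = 1 * U (2 * lam 0 - z) := by
      intro z; rw [one_mul]; exact hsym 0 h0T z y
    have d1 := deriv_reflect_smul hs0
    have d2 := deriv_reflect_smul d1
    have d3 := deriv_reflect_smul d2
    have d4 := deriv_reflect_smul d3
    have e1 : ∀ z : ℝ, deriv U (2 * lam 0 - z) = -deriv U z := by
      intro z; have := d1 z; linarith
    have e2 : ∀ z : ℝ, deriv (deriv U) (2 * lam 0 - z) = deriv (deriv U) z := by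
      intro z; have := d2 z; linarith
    have e3 : ∀ z : ℝ, deriv (deriv (deriv U)) (2 * lam 0 - z) = -deriv (deriv (deriv U)) z := by
      intro z; have := d3 z; linarith
    have e4 : ∀ z : ℝ, deriv (deriv (deriv (deriv U))) (2 * lam 0 - z)
        = deriv (deriv (deriv (deriv U))) z := by
      intro z; have := d4 z; linarith
    -- nonlinearity slice
    set M : ℝ → ℝ := fun z => 3 * U z * deriv U z - 2 * deriv U z * deriv (deriv U) z
      - U z * deriv (deriv (deriv U)) z with hMdef
    have hM : ∀ z : ℝ, M z = -1 * M (2 * lam 0 - z) := by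
      intro z
      have e0 : U (2 * lam 0 - z) = U z := by have := hs0 z; linarith
      simp only [hMdef]
      rw [e0, e1 z, e2 z, e3 z]; ring
    have dM : ∀ z : ℝ, deriv M (2 * lam 0 - z) = deriv M z := by
      intro z; have := deriv_reflect_smul hM z; linarith
    -- transversal term is symmetric
    have hPy : ∀ z : ℝ, py (py u) 0 (2 * lam 0 - z) y = py (py u) 0 z y := by
      intro z
      have h1 : ∀ s : ℝ, py u 0 (2 * lam 0 - z) s = py u 0 z s := by
        intro s
        show deriv (fun r => u 0 (2 * lam 0 - z) r) s = deriv (fun r => u 0 z r) s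
        congr 1; funext r; exact (hsym 0 h0T z r).symm
      show deriv (fun s => py u 0 (2 * lam 0 - z) s) y = deriv (fun s => py u 0 z s) y
      congr 1; funext s; exact h1 s
    -- time derivative of the symmetry relation at t = 0
    have hB : ∀ z : ℝ, F z = F (2 * lam 0 - z) + 2 * c * deriv U (2 * lam 0 - z) := by
      intro z
      have hg : HasDerivAt (fun s : ℝ => ((s, 2 * lam s - z, y) : ℝ × ℝ × ℝ))
          (((1:ℝ), 2 * c, (0:ℝ))) 0 :=
        (hasDerivAt_id 0).prodMk
          ((((hlam.differentiable one_ne_zero 0).hasDerivAt.const_mul 2).sub_const z).prodMk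
            (hasDerivAt_const 0 y))
      have hψd : HasDerivAt (fun s => u s (2 * lam s - z) y)
          (fderiv ℝ U3 ((0:ℝ), 2 * lam 0 - z, y) ((1:ℝ), 2 * c, (0:ℝ))) 0 :=
        by have := (hdiff ((0:ℝ), 2 * lam 0 - z, y)).hasFDerivAt.comp_hasDerivAt 0 hg; exact this
      have hφw : HasDerivWithinAt (fun s => u s z y)
          (fderiv ℝ U3 ((0:ℝ), z, y) ((1:ℝ), (0:ℝ), (0:ℝ))) (Icc (0:ℝ) T) 0 :=
        (hAt ((0:ℝ), z, y)).hasDerivWithinAt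
      have hcongr : HasDerivWithinAt (fun s => u s z y)
          (fderiv ℝ U3 ((0:ℝ), 2 * lam 0 - z, y) ((1:ℝ), 2 * c, (0:ℝ))) (Icc (0:ℝ) T) 0 :=
        hψd.hasDerivWithinAt.congr (fun s hs => hsym s hs z y) (hsym 0 h0T z y)
      have hud : UniqueDiffWithinAt ℝ (Icc (0:ℝ) T) 0 := (uniqueDiffOn_Icc hT) 0 h0T
      have hval : fderiv ℝ U3 ((0:ℝ), z, y) ((1:ℝ), (0:ℝ), (0:ℝ))
          = fderiv ℝ U3 ((0:ℝ), 2 * lam 0 - z, y) ((1:ℝ), 2 * c, (0:ℝ)) :=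
        (hφw.derivWithin hud).symm.trans (hcongr.derivWithin hud)
      have hvec : (((1:ℝ), 2 * c, (0:ℝ)) : ℝ × ℝ × ℝ)
          = ((1:ℝ), (0:ℝ), (0:ℝ)) + (2 * c) • ((0:ℝ), (1:ℝ), (0:ℝ)) := by
        simp [Prod.ext_iff]
      have hsplit : fderiv ℝ U3 ((0:ℝ), 2 * lam 0 - z, y) ((1:ℝ), 2 * c, (0:ℝ))
          = fderiv ℝ U3 ((0:ℝ), 2 * lam 0 - z, y) ((1:ℝ), (0:ℝ), (0:ℝ))
            + 2 * c * fderiv ℝ U3 ((0:ℝ), 2 * lam 0 - z, y) ((0:ℝ), (1:ℝ), (0:ℝ)) := by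
        rw [hvec, map_add, map_smul, smul_eq_mul]
      have : pt u 0 z y = pt u 0 (2 * lam 0 - z) y + 2 * c * px u 0 (2 * lam 0 - z) y := by
        rw [hpt 0 z y, hpt 0 (2 * lam 0 - z) y, hpx 0 (2 * lam 0 - z) y, hval, hsplit]
      exact this
    -- reflected form of the relation
    have hFrefl : ∀ z : ℝ, (fun w => F w + 2 * c * deriv U w) z = 1 * F (2 * lam 0 - z) := by
      intro z
      have hBz := hB z
      rw [e1 z] at hBz
      simp only [one_mul]
      linarith [hBz]
    have rF1 : ∀ z : ℝ, deriv F (2 * lam 0 - z) = -(deriv F z + 2 * c * deriv (deriv U) z) := by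
      intro z
      have h := deriv_reflect_smul hFrefl z
      have hD : deriv (fun w => F w + 2 * c * deriv U w) z
          = deriv F z + 2 * c * deriv (deriv U) z := by
        rw [deriv_fun_add (hFd z) ((hU1d z).const_mul (2 * c)), deriv_const_mul_field]
      rw [hD] at h; linarith
    have h2F : ∀ z : ℝ, (fun w => deriv F w + 2 * c * deriv (deriv U) w) z
        = -1 * deriv F (2 * lam 0 - z) := by
      intro z; have := rF1 z; simp only; linarith
    have rF2 : ∀ z : ℝ, deriv (deriv F) (2 * lam 0 - z)
        = deriv (deriv F) z + 2 * c * deriv (deriv (deriv U)) z := by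
      intro z
      have h := deriv_reflect_smul h2F z
      have hD : deriv (fun w => deriv F w + 2 * c * deriv (deriv U) w) z
          = deriv (deriv F) z + 2 * c * deriv (deriv (deriv U)) z := by
        rw [deriv_fun_add (hF1d z) ((hU2d z).const_mul (2 * c)), deriv_const_mul_field]
      rw [hD] at h; linarith
    have h3F : ∀ z : ℝ, (fun w => deriv (deriv F) w + 2 * c * deriv (deriv (deriv U)) w) z
        = 1 * deriv (deriv F) (2 * lam 0 - z) := by
      intro z; have := rF2 z; simp only; linarith
    have hF2d : Differentiable ℝ (deriv (deriv F)) :=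
      contDiffInf_diff (contDiff_infty_iff_deriv.mp hF1sm).2
    have rF3 : ∀ z : ℝ, deriv (deriv (deriv F)) (2 * lam 0 - z)
        = -(deriv (deriv (deriv F)) z + 2 * c * deriv (deriv (deriv (deriv U))) z) := by
      intro z
      have h := deriv_reflect_smul h3F z
      have hD : deriv (fun w => deriv (deriv F) w + 2 * c * deriv (deriv (deriv U)) w) z
          = deriv (deriv (deriv F)) z + 2 * c * deriv (deriv (deriv (deriv U))) z := by
        rw [deriv_fun_add (hF2d z) ((hU3d z).const_mul (2 * c)), deriv_const_mul_field]
      rw [hD] at h; linarith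
    -- the equation, in 1D-slice form
    have E : ∀ z : ℝ, (deriv F z - deriv (deriv (deriv F)) z) + κ * deriv (deriv U) z
        + deriv M z + py (py u) 0 z y = 0 := fun z => heq 0 h0T z y
    have Ex := E x₀
    have Er := E (2 * lam 0 - x₀)
    rw [rF1 x₀, rF3 x₀, e2 x₀, dM x₀, hPy x₀] at Er
    show deriv F x₀ - deriv (deriv (deriv F)) x₀
      = -c * (deriv (deriv U) x₀ - deriv (deriv (deriv (deriv U))) x₀)
    nlinarith [Ex, Er]
  -- the candidate traveling-wave solution
  set v : ℝ → ℝ → ℝ → ℝ := fun t x y => u 0 (x - c * t) y with hvdef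
  have hvsm : ContDiff ℝ (⊤ : ℕ∞) (fun p : ℝ × ℝ × ℝ => v p.1 p.2.1 p.2.2) := by
    have hmap : ContDiff ℝ (⊤ : ℕ∞) (fun p : ℝ × ℝ × ℝ =>
        (((0:ℝ), p.2.1 - c * p.1, p.2.2) : ℝ × ℝ × ℝ)) :=
      contDiff_const.prodMk
        (((contDiff_fst.comp contDiff_snd).sub (contDiff_const.mul contDiff_fst)).prodMk
          (contDiff_snd.comp contDiff_snd))
    exact hU3.comp hmap
  have heqv : IsClassicalSolCHKP T κ v := by
    intro t _ x y
    set U : ℝ → ℝ := fun x => u 0 x y with hUdef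
    set F : ℝ → ℝ := fun x => pt u 0 x y with hFdef
    set M : ℝ → ℝ := fun z => 3 * U z * deriv U z - 2 * deriv U z * deriv (deriv U) z
      - U z * deriv (deriv (deriv U)) z with hMdef
    have hUsm : ContDiff ℝ (⊤ : ℕ∞) U := hxsm 0 y
    have hUd : Differentiable ℝ U := contDiffInf_diff hUsm
    set k : ℝ := c * t with hk
    -- pt v slice
    have hptv : ∀ x' : ℝ, pt v t x' y = deriv U (x' - k) * -c := by
      intro x'
      have hinner : HasDerivAt (fun s : ℝ => x' - c * s) (-c) t := by
        simpa using ((hasDerivAt_id t).const_mul c).const_sub x'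
      have h1 : HasDerivAt (fun s : ℝ => U (x' - c * s)) (deriv U (x' - c * t) * -c) t :=
        by have := HasDerivAt.comp t (hUd (x' - c * t)).hasDerivAt hinner; exact this
      exact h1.deriv
    have hpxv : ∀ x' : ℝ, px v t x' y = deriv U (x' - k) :=
      fun x' => deriv_comp_sub_const U k x'
    have hpxxv : ∀ x' : ℝ, px (px v) t x' y = deriv (deriv U) (x' - k) := by
      intro x'
      have h : (fun s => px v t s y) = fun s => deriv U (s - k) := funext hpxv
      show deriv (fun s => px v t s y) x' = _
      rw [h]; exact deriv_comp_sub_const (deriv U) k x'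
    have hpxxxv : ∀ x' : ℝ, px (px (px v)) t x' y = deriv (deriv (deriv U)) (x' - k) := by
      intro x'
      have h : (fun s => px (px v) t s y) = fun s => deriv (deriv U) (s - k) := funext hpxxv
      show deriv (fun s => px (px v) t s y) x' = _
      rw [h]; exact deriv_comp_sub_const (deriv (deriv U)) k x'
    have hptxv : ∀ x' : ℝ, px (pt v) t x' y = deriv (deriv U) (x' - k) * -c := by
      intro x'
      have h : (fun s => pt v t s y) = fun s => deriv U (s - k) * -c := funext hptv
      show deriv (fun s => pt v t s y) x' = _
      rw [h, deriv_mul_const_field]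
      rw [deriv_comp_sub_const (deriv U) k x']
    have hptxxv : ∀ x' : ℝ, px (px (pt v)) t x' y = deriv (deriv (deriv U)) (x' - k) * -c := by
      intro x'
      have h : (fun s => px (pt v) t s y) = fun s => deriv (deriv U) (s - k) * -c :=
        funext hptxv
      show deriv (fun s => px (pt v) t s y) x' = _
      rw [h, deriv_mul_const_field, deriv_comp_sub_const (deriv (deriv U)) k x']
    have hptxxxv : ∀ x' : ℝ, px (px (px (pt v))) t x' y
        = deriv (deriv (deriv (deriv U))) (x' - k) * -c := by
      intro x'
      have h : (fun s => px (px (pt v)) t s y) = fun s => deriv (deriv (deriv U)) (s - k) * -c :=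
        funext hptxxv
      show deriv (fun s => px (px (pt v)) t s y) x' = _
      rw [h, deriv_mul_const_field, deriv_comp_sub_const (deriv (deriv (deriv U))) k x']
    have hNv : ∀ x' : ℝ, chkpNonlin v t x' y = M (x' - k) := by
      intro x'
      show 3 * v t x' y * px v t x' y - 2 * px v t x' y * px (px v) t x' y
        - v t x' y * px (px (px v)) t x' y = M (x' - k)
      rw [hpxv x', hpxxv x', hpxxxv x']
    have hpxNv : px (chkpNonlin v) t x y = deriv M (x - k) := by
      have h : (fun s => chkpNonlin v t s y) = fun s => M (s - k) := funext hNv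
      show deriv (fun s => chkpNonlin v t s y) x = _
      rw [h]; exact deriv_comp_sub_const M k x
    have hpyyv : py (py v) t x y = py (py u) 0 (x - k) y := rfl
    -- the equation at (0, x-k, y) for u and the star identity
    have E : (deriv F (x - k) - deriv (deriv (deriv F)) (x - k))
        + κ * deriv (deriv U) (x - k) + deriv M (x - k) + py (py u) 0 (x - k) y = 0 :=
      heq 0 h0T (x - k) y
    have hs : deriv F (x - k) - deriv (deriv (deriv F)) (x - k)
        = -c * (deriv (deriv U) (x - k) - deriv (deriv (deriv (deriv U))) (x - k)) :=
      hstar (x - k) y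
    show px (pt v) t x y - px (px (px (pt v))) t x y + κ * px (px v) t x y
      + px (chkpNonlin v) t x y + py (py v) t x y = 0
    rw [hptxv x, hptxxxv x, hpxxv x, hpxNv, hpyyv]
    nlinarith [E, hs]
  have hinitv : ∀ x y : ℝ, v 0 x y = u₀ x y := by
    intro x y
    show u 0 (x - c * 0) y = u₀ x y
    rw [mul_zero, sub_zero]; exact hinit x y
  intro t ht x y
  have h := huniq v hvsm heqv hinitv t ht x y
  calc u t x y = v t x y := h.symm
    _ = u 0 (x - c * t) y := rfl
    _ = u₀ (x - c * t) y := hinit _ y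
end

section
/- Let u : I × ℝ² → ℝ be a classical solution of the rescaled Camassa–Holm–Kadomtsev–Petviashvili equation L u_t + κ u_{xx} + (3 u u_x − 2 u_x u_{xx} − u u_{xxx})_x + u_{yy} = 0 which is x-symmetric with axis of symmetry λ ∈ C¹(ℝ). Then u satisfies both equations L(u_t + λ̇ u_x) = 0 and −L(λ̇ u_x) + κ u_{xx} + (3 u u_x − 2 u_x u_{xx} − u u_{xxx})_x + u_{yy} = 0 on I × ℝ². -/
open Set

open scoped ContDiff

section AuxCHKP
noncomputable def U3 (u : ℝ → ℝ → ℝ → ℝ) : ℝ × ℝ × ℝ → ℝ := fun p => u p.1 p.2.1 p.2.2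

lemma hasDerivAt_t (hu : ContDiff ℝ ∞ (U3 u)) (t x y : ℝ) :
    HasDerivAt (fun s => u s x y) (fderiv ℝ (U3 u) (t, x, y) (1, 0, 0)) t := by
  have hc : HasDerivAt (fun s : ℝ => (s, x, y)) ((1 : ℝ), (0 : ℝ), (0 : ℝ)) t :=
    (hasDerivAt_id t).prodMk ((hasDerivAt_const t x).prodMk (hasDerivAt_const t y))
  exact ((hu.differentiable (by simp)) (t, x, y)).hasFDerivAt.comp_hasDerivAt t hc

lemma hasDerivAt_x (hu : ContDiff ℝ ∞ (U3 u)) (t x y : ℝ) :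
    HasDerivAt (fun s => u t s y) (fderiv ℝ (U3 u) (t, x, y) (0, 1, 0)) x := by
  have hc : HasDerivAt (fun s : ℝ => (t, s, y)) ((0 : ℝ), (1 : ℝ), (0 : ℝ)) x :=
    (hasDerivAt_const x t).prodMk ((hasDerivAt_id x).prodMk (hasDerivAt_const x y))
  exact ((hu.differentiable (by simp)) (t, x, y)).hasFDerivAt.comp_hasDerivAt x hc

lemma hasDerivAt_y (hu : ContDiff ℝ ∞ (U3 u)) (t x y : ℝ) :
    HasDerivAt (fun s => u t x s) (fderiv ℝ (U3 u) (t, x, y) (0, 0, 1)) y := by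
  have hc : HasDerivAt (fun s : ℝ => (t, x, s)) ((0 : ℝ), (0 : ℝ), (1 : ℝ)) y :=
    (hasDerivAt_const y t).prodMk ((hasDerivAt_const y x).prodMk (hasDerivAt_id y))
  exact ((hu.differentiable (by simp)) (t, x, y)).hasFDerivAt.comp_hasDerivAt y hc

lemma pt_eq (hu : ContDiff ℝ ∞ (U3 u)) (t x y : ℝ) :
    pt u t x y = fderiv ℝ (U3 u) (t, x, y) (1, 0, 0) := (hasDerivAt_t hu t x y).deriv
lemma px_eq (hu : ContDiff ℝ ∞ (U3 u)) (t x y : ℝ) :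
    px u t x y = fderiv ℝ (U3 u) (t, x, y) (0, 1, 0) := (hasDerivAt_x hu t x y).deriv
lemma py_eq (hu : ContDiff ℝ ∞ (U3 u)) (t x y : ℝ) :
    py u t x y = fderiv ℝ (U3 u) (t, x, y) (0, 0, 1) := (hasDerivAt_y hu t x y).deriv

lemma smooth_fderiv_apply (hu : ContDiff ℝ ∞ (U3 u)) (v : ℝ × ℝ × ℝ) :
    ContDiff ℝ ∞ (fun p : ℝ × ℝ × ℝ => fderiv ℝ (U3 u) p v) :=
  (hu.fderiv_right (le_refl _)).clm_apply contDiff_const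

lemma smooth_pt (hu : ContDiff ℝ ∞ (U3 u)) : ContDiff ℝ ∞ (U3 (pt u)) := by
  have : U3 (pt u) = fun p : ℝ × ℝ × ℝ => fderiv ℝ (U3 u) p (1, 0, 0) := by
    funext p; exact pt_eq hu p.1 p.2.1 p.2.2
  rw [this]; exact smooth_fderiv_apply hu _

lemma smooth_px (hu : ContDiff ℝ ∞ (U3 u)) : ContDiff ℝ ∞ (U3 (px u)) := by
  have : U3 (px u) = fun p : ℝ × ℝ × ℝ => fderiv ℝ (U3 u) p (0, 1, 0) := by
    funext p; exact px_eq hu p.1 p.2.1 p.2.2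
  rw [this]; exact smooth_fderiv_apply hu _

lemma smooth_py (hu : ContDiff ℝ ∞ (U3 u)) : ContDiff ℝ ∞ (U3 (py u)) := by
  have : U3 (py u) = fun p : ℝ × ℝ × ℝ => fderiv ℝ (U3 u) p (0, 0, 1) := by
    funext p; exact py_eq hu p.1 p.2.1 p.2.2
  rw [this]; exact smooth_fderiv_apply hu _

/-- smoothness of the `x`-section. -/
lemma smooth_sectx (hu : ContDiff ℝ ∞ (U3 u)) (t y : ℝ) :
    ContDiff ℝ ∞ (fun x => u t x y) :=
  hu.comp (contDiff_const.prodMk (contDiff_id.prodMk contDiff_const))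
lemma smooth_sectt (hu : ContDiff ℝ ∞ (U3 u)) (x y : ℝ) :
    ContDiff ℝ ∞ (fun t => u t x y) :=
  hu.comp (contDiff_id.prodMk (contDiff_const.prodMk contDiff_const))
lemma smooth_secty (hu : ContDiff ℝ ∞ (U3 u)) (t x : ℝ) :
    ContDiff ℝ ∞ (fun y => u t x y) :=
  hu.comp (contDiff_const.prodMk (contDiff_const.prodMk contDiff_id))
section Reflect
variable {u : ℝ → ℝ → ℝ → ℝ} {lam : ℝ → ℝ} {T : ℝ}

lemma pt_reflect (hT : 0 < T) (hu : ContDiff ℝ ∞ (U3 u)) (hlam : ContDiff ℝ 1 lam)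
    (hsym : ∀ t ∈ Icc (0:ℝ) T, ∀ x y : ℝ, u t x y = u t (2 * lam t - x) y) :
    ∀ t ∈ Icc (0:ℝ) T, ∀ x y : ℝ,
      pt u t x y = pt u t (2 * lam t - x) y
        + 2 * deriv lam t * px u t (2 * lam t - x) y := by
  intro t ht x y
  set D' : ℝ → ℝ := fun s => pt u s x y -
    (pt u s (2 * lam s - x) y + 2 * deriv lam s * px u s (2 * lam s - x) y) with hD'
  set G : ℝ → ℝ := fun s => u s x y - u s (2 * lam s - x) y with hGdef
  have hlamd : Differentiable ℝ lam := hlam.differentiable one_ne_zero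
  have hG : ∀ s : ℝ, HasDerivAt G (D' s) s := by
    intro s
    have hA : HasDerivAt (fun r => u r x y) (pt u s x y) s := by
      have := hasDerivAt_t hu s x y
      rwa [← pt_eq hu] at this
    have hφ : HasDerivAt (fun r : ℝ => (r, 2 * lam r - x, y))
        ((1 : ℝ), 2 * deriv lam s, (0 : ℝ)) s :=
      (hasDerivAt_id s).prodMk
        (((((hlamd s).hasDerivAt).const_mul 2).sub_const x).prodMk (hasDerivAt_const s y))
    have hB0 : HasDerivAt (fun r => u r (2 * lam r - x) y)
        (fderiv ℝ (U3 u) (s, 2 * lam s - x, y) (1, 2 * deriv lam s, 0)) s :=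
      ((hu.differentiable (by simp)) _).hasFDerivAt.comp_hasDerivAt s hφ
    have hval : fderiv ℝ (U3 u) (s, 2 * lam s - x, y) (1, 2 * deriv lam s, 0)
        = pt u s (2 * lam s - x) y + 2 * deriv lam s * px u s (2 * lam s - x) y := by
      have hsplit : ((1 : ℝ), 2 * deriv lam s, (0 : ℝ))
          = ((1 : ℝ), (0 : ℝ), (0 : ℝ)) + (2 * deriv lam s) • ((0 : ℝ), (1 : ℝ), (0 : ℝ)) := by
        simp [Prod.ext_iff]
      rw [hsplit, map_add, map_smul, pt_eq hu, px_eq hu]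
      simp [smul_eq_mul]
    exact hA.sub (hval ▸ hB0)
  have hD'cont : Continuous D' := by
    have cc0 : Continuous fun s : ℝ => ((s, x, y) : ℝ × ℝ × ℝ) := by fun_prop
    have c1 : Continuous fun s : ℝ => pt u s x y := (smooth_pt hu).continuous.comp cc0
    have ccurve : Continuous fun s : ℝ => ((s, 2 * lam s - x, y) : ℝ × ℝ × ℝ) := by
      fun_prop (disch := exact hlam.continuous)
    have c2 : Continuous fun s : ℝ => pt u s (2 * lam s - x) y :=
      (smooth_pt hu).continuous.comp ccurve
    have c3 : Continuous fun s : ℝ => px u s (2 * lam s - x) y :=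
      (smooth_px hu).continuous.comp ccurve
    have c4 : Continuous (deriv lam) := hlam.continuous_deriv le_rfl
    exact c1.sub (c2.add ((continuous_const.mul c4).mul c3))
  have hIoo : EqOn D' (fun _ => (0 : ℝ)) (Ioo 0 T) := by
    intro s hs
    have hev : G =ᶠ[nhds s] fun _ => (0 : ℝ) := by
      filter_upwards [Icc_mem_nhds hs.1 hs.2] with z hz
      simp [hGdef, hsym z hz x y]
    have : deriv G s = 0 := by rw [hev.deriv_eq]; simp
    simpa using ((hG s).deriv).symm.trans this
  have hIcc : EqOn D' (fun _ => (0 : ℝ)) (Icc 0 T) := by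
    have := hIoo.closure hD'cont continuous_const
    rwa [closure_Ioo hT.ne] at this
  have h0 : D' t = 0 := hIcc ht
  simp only [hD'] at h0
  linarith
end Reflect


lemma deriv_reflect {f : ℝ → ℝ} (hf : Differentiable ℝ f) {c : ℝ}
    (h : ∀ x, f x = f (c - x)) : ∀ x, deriv f x = - deriv f (c - x) := by
  intro x
  have h1 : HasDerivAt (fun z => f (c - z)) (deriv f (c - x) * (-1)) x :=
    (hf (c - x)).hasDerivAt.comp x (((hasDerivAt_id x).const_sub c))
  have h2 : deriv f x = deriv (fun z => f (c - z)) x := by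
    congr 1; funext z; exact h z
  rw [h2, h1.deriv]; ring

lemma deriv_reflect_neg {f : ℝ → ℝ} (hf : Differentiable ℝ f) {c : ℝ}
    (h : ∀ x, f x = - f (c - x)) : ∀ x, deriv f x = deriv f (c - x) := by
  intro x
  have h1 : HasDerivAt (fun z => -f (c - z)) (-(deriv f (c - x) * (-1))) x :=
    ((hf (c - x)).hasDerivAt.comp x (((hasDerivAt_id x).const_sub c))).neg
  have h2 : deriv f x = deriv (fun z => -f (c - z)) x := by
    congr 1; funext z; exact h z
  rw [h2, h1.deriv]; ring

lemma one_le_inf : (1 : WithTop ℕ∞) ≤ ∞ := by exact_mod_cast le_top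

lemma cd_deriv {g : ℝ → ℝ} (h : ContDiff ℝ ∞ g) : ContDiff ℝ ∞ (deriv g) :=
  (contDiff_infty_iff_deriv.mp h).2

lemma deriv_comb {A B : ℝ → ℝ} (hA : ContDiff ℝ ∞ A) (hB : ContDiff ℝ ∞ B) (l : ℝ) :
    deriv (fun z => A z + l * B z) = fun z => deriv A z + l * deriv B z := by
  funext z
  rw [deriv_fun_add (hA.differentiable (by simp) z)
      ((contDiff_const.mul hB).differentiable (by simp) z),
    deriv_const_mul l (hB.differentiable (by simp) z)]

lemma deriv_cmul {B : ℝ → ℝ} (hB : ContDiff ℝ ∞ B) (l : ℝ) :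
    deriv (fun z => l * B z) = fun z => l * deriv B z :=
  funext fun z => deriv_const_mul l (hB.differentiable (by simp) z)

lemma px_sect {u' : ℝ → ℝ → ℝ → ℝ} {t y : ℝ} {h : ℝ → ℝ} (hh : ∀ z, u' t z y = h z) :
    ∀ a, px u' t a y = deriv h a := fun a => by
  show deriv (fun s => u' t s y) a = deriv h a
  rw [show (fun s => u' t s y) = h from funext hh]

lemma main_aux (κ l c : ℝ) (f p q : ℝ → ℝ)
    (hf : ContDiff ℝ ∞ f) (hp : ContDiff ℝ ∞ p)
    (hsf : ∀ s, f s = f (c - s))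
    (hq : ∀ s, q s = q (c - s))
    (hpr : ∀ s, p s = p (c - s) + 2 * l * deriv f (c - s))
    (heqn : ∀ s, (deriv p s - deriv (deriv (deriv p)) s) + κ * deriv (deriv f) s
      + deriv (fun z => 3 * f z * deriv f z - 2 * deriv f z * deriv (deriv f) z
          - f z * deriv (deriv (deriv f)) z) s + q s = 0) :
    ∀ s, (deriv p s - deriv (deriv (deriv p)) s)
        + l * (deriv (deriv f) s - deriv (deriv (deriv (deriv f))) s) = 0 := by
  intro s
  have hdiff : ∀ {g : ℝ → ℝ}, ContDiff ℝ ∞ g → Differentiable ℝ g :=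
    fun hg => hg.differentiable (by simp)
  -- parities of derivatives of f
  have hf1 := deriv_reflect (hdiff hf) hsf
  have hf2 := deriv_reflect_neg (hdiff (cd_deriv hf)) hf1
  have hf3 := deriv_reflect (hdiff (cd_deriv (cd_deriv hf))) hf2
  have hf4 := deriv_reflect_neg (hdiff (cd_deriv (cd_deriv (cd_deriv hf)))) hf3
  -- the nonlinearity is odd
  set n : ℝ → ℝ := fun z => 3 * f z * deriv f z - 2 * deriv f z * deriv (deriv f) z
      - f z * deriv (deriv (deriv f)) z with hndef
  have hnsm : ContDiff ℝ ∞ n :=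
    (((contDiff_const.mul hf).mul (cd_deriv hf)).sub
      ((contDiff_const.mul (cd_deriv hf)).mul (cd_deriv (cd_deriv hf)))).sub
      (hf.mul (cd_deriv (cd_deriv (cd_deriv hf))))
  have hnodd : ∀ z, n z = - n (c - z) := by
    intro z
    simp only [hndef]
    rw [hsf z, hf1 z, hf2 z, hf3 z]
    ring
  have hdn := deriv_reflect_neg (hdiff hnsm) hnodd
  -- the section of w := p + l f' is even
  set h : ℝ → ℝ := fun z => p z + l * deriv f z with hhdef
  have hhsm : ContDiff ℝ ∞ h := hp.add (contDiff_const.mul (cd_deriv hf))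
  have hheven : ∀ z, h z = h (c - z) := by
    intro z
    simp only [hhdef]
    rw [hpr z, hf1 z]
    ring
  have hh1 := deriv_reflect (hdiff hhsm) hheven
  have hh2 := deriv_reflect_neg (hdiff (cd_deriv hhsm)) hh1
  have hh3 := deriv_reflect (hdiff (cd_deriv (cd_deriv hhsm))) hh2
  -- expansions of the derivatives of h
  have e1 : deriv h = fun z => deriv p z + l * deriv (deriv f) z := by
    rw [hhdef]; exact deriv_comb hp (cd_deriv hf) l
  have e2 : deriv (deriv h) = fun z => deriv (deriv p) z + l * deriv (deriv (deriv f)) z := by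
    rw [e1]; exact deriv_comb (cd_deriv hp) (cd_deriv (cd_deriv hf)) l
  have e3 : deriv (deriv (deriv h))
      = fun z => deriv (deriv (deriv p)) z + l * deriv (deriv (deriv (deriv f))) z := by
    rw [e2]; exact deriv_comb (cd_deriv (cd_deriv hp)) (cd_deriv (cd_deriv (cd_deriv hf))) l
  -- E z := deriv h z - deriv³ h z is odd...
  have hodd : (deriv h s - deriv (deriv (deriv h)) s)
      = - (deriv h (c - s) - deriv (deriv (deriv h)) (c - s)) := by
    rw [hh1 s, hh3 s]; ring
  -- ...and even, via the equation
  have heven : ∀ z, deriv h z - deriv (deriv (deriv h)) z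
      = - (κ * deriv (deriv f) z + deriv n z + q z)
        + l * (deriv (deriv f) z - deriv (deriv (deriv (deriv f))) z) := by
    intro z
    have := heqn z
    rw [congrFun e1 z, congrFun e3 z]
    linarith
  have hzero : deriv h s - deriv (deriv (deriv h)) s = 0 := by
    have h1 := heven s
    have h2 := heven (c - s)
    rw [← hf2 s, ← hf4 s, ← hdn s, ← hq s] at h2
    linarith [hodd]
  rw [congrFun e1 s, congrFun e3 s] at hzero
  have := heqn s
  linarith

end AuxCHKP

/-- An `x`-symmetric classical solution of the CH-KP equation satisfies both
`L(uₜ + λ̇ uₓ) = 0` and `-L(λ̇ uₓ) + κ uₓₓ + (3 u uₓ - 2 uₓ uₓₓ - u uₓₓₓ)ₓ + u_yy = 0`. -/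


theorem chkp_xSymmetric_splits
    (T : ℝ) (hT : 0 < T) (κ : ℝ)
    (u : ℝ → ℝ → ℝ → ℝ)
    (hu : ContDiff ℝ (⊤ : ℕ∞) (fun p : ℝ × ℝ × ℝ => u p.1 p.2.1 p.2.2))
    (heq : IsClassicalSolCHKP T κ u)
    (lam : ℝ → ℝ) (hlam : ContDiff ℝ 1 lam)
    (hsym : ∀ t ∈ Icc (0:ℝ) T, ∀ x y : ℝ, u t x y = u t (2 * lam t - x) y) :
    ∀ t ∈ Icc (0:ℝ) T, ∀ x y : ℝ,
      Lx (fun s a b => pt u s a b + deriv lam s * px u s a b) t x y = 0 ∧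
      - Lx (fun s a b => deriv lam s * px u s a b) t x y + κ * px (px u) t x y
        + px (chkpNonlin u) t x y + py (py u) t x y = 0 := by
  intro t ht x y
  have hu' : ContDiff ℝ ∞ (U3 u) := hu.of_le (mod_cast le_top)
  -- section identities in the x-variable at fixed (t, y)
  have epx : ∀ a : ℝ, px u t a y = deriv (fun s => u t s y) a := fun a => rfl
  have epx2 : ∀ a : ℝ, px (px u) t a y = deriv (deriv (fun s => u t s y)) a := px_sect epx
  have eptx : ∀ a : ℝ, px (pt u) t a y = deriv (fun s => pt u t s y) a :=
    px_sect (fun _ => rfl)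
  have eptx3 : ∀ a : ℝ, px (px (px (pt u))) t a y
      = deriv (deriv (deriv (fun s => pt u t s y))) a := px_sect (px_sect eptx)
  have eN : ∀ a : ℝ, px (chkpNonlin u) t a y
      = deriv (fun z => 3 * u t z y * deriv (fun s => u t s y) z
          - 2 * deriv (fun s => u t s y) z * deriv (deriv (fun s => u t s y)) z
          - u t z y * deriv (deriv (deriv (fun s => u t s y))) z) a :=
    px_sect (fun z => by
      show 3 * u t z y * px u t z y - 2 * px u t z y * px (px u) t z y
          - u t z y * px (px (px u)) t z y = _
      rw [epx z, epx2 z, px_sect epx2 z])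
  -- evenness of the transversal term
  have hq : ∀ a : ℝ, py (py u) t a y = py (py u) t (2 * lam t - a) y := by
    intro a
    have e : (fun b => py u t a b) = (fun b => py u t (2 * lam t - a) b) := by
      funext b
      show deriv (fun r => u t a r) b = deriv (fun r => u t (2 * lam t - a) r) b
      rw [show (fun r => u t a r) = (fun r => u t (2 * lam t - a) r) from
        funext fun r => hsym t ht a r]
    show deriv (fun b => py u t a b) y = deriv (fun b => py u t (2 * lam t - a) b) y
    rw [e]
  -- reflection identity for the time derivative
  have hpr : ∀ a : ℝ, (fun s => pt u t s y) a = (fun s => pt u t s y) (2 * lam t - a)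
      + 2 * deriv lam t * deriv (fun s => u t s y) (2 * lam t - a) := by
    intro a
    have h0 := pt_reflect hT hu' hlam hsym t ht a y
    rw [epx (2 * lam t - a)] at h0
    exact h0
  -- the PDE in section form
  have heqn : ∀ a : ℝ, (deriv (fun s => pt u t s y) a
        - deriv (deriv (deriv (fun s => pt u t s y))) a)
      + κ * deriv (deriv (fun s => u t s y)) a
      + deriv (fun z => 3 * u t z y * deriv (fun s => u t s y) z
          - 2 * deriv (fun s => u t s y) z * deriv (deriv (fun s => u t s y)) z
          - u t z y * deriv (deriv (deriv (fun s => u t s y))) z) a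
      + py (py u) t a y = 0 := by
    intro a
    have h0 := heq t ht a y
    have hl : Lx (pt u) t a y = deriv (fun s => pt u t s y) a
        - deriv (deriv (deriv (fun s => pt u t s y))) a := by
      show px (pt u) t a y - px (px (px (pt u))) t a y = _
      rw [eptx a, eptx3 a]
    rw [hl, epx2 a, eN a] at h0
    linarith
  have hf : ContDiff ℝ ∞ (fun s => u t s y) := smooth_sectx hu' t y
  have hp : ContDiff ℝ ∞ (fun s => pt u t s y) := smooth_sectx (smooth_pt hu') t y
  have key := main_aux κ (deriv lam t) (2 * lam t) (fun s => u t s y)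
    (fun s => pt u t s y) (fun a => py (py u) t a y) hf hp
    (fun s => hsym t ht s y) hq hpr heqn
  -- expansions of the derivatives of the section of w
  have E1 : deriv (fun z => pt u t z y + deriv lam t * deriv (fun s => u t s y) z)
      = fun z => deriv (fun s => pt u t s y) z
        + deriv lam t * deriv (deriv (fun s => u t s y)) z :=
    deriv_comb hp (cd_deriv hf) (deriv lam t)
  have E2 : deriv (deriv (fun z => pt u t z y + deriv lam t * deriv (fun s => u t s y) z))
      = fun z => deriv (deriv (fun s => pt u t s y)) z
        + deriv lam t * deriv (deriv (deriv (fun s => u t s y))) z := by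
    rw [E1]; exact deriv_comb (cd_deriv hp) (cd_deriv (cd_deriv hf)) (deriv lam t)
  have E3 : deriv (deriv (deriv
        (fun z => pt u t z y + deriv lam t * deriv (fun s => u t s y) z)))
      = fun z => deriv (deriv (deriv (fun s => pt u t s y))) z
        + deriv lam t * deriv (deriv (deriv (deriv (fun s => u t s y)))) z := by
    rw [E2]; exact deriv_comb (cd_deriv (cd_deriv hp)) (cd_deriv (cd_deriv (cd_deriv hf)))
      (deriv lam t)
  -- expansions for the section of λ' uₓ
  have D1 : deriv (fun z => deriv lam t * deriv (fun s => u t s y) z)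
      = fun z => deriv lam t * deriv (deriv (fun s => u t s y)) z :=
    deriv_cmul (cd_deriv hf) (deriv lam t)
  have D2 : deriv (deriv (fun z => deriv lam t * deriv (fun s => u t s y) z))
      = fun z => deriv lam t * deriv (deriv (deriv (fun s => u t s y))) z := by
    rw [D1]; exact deriv_cmul (cd_deriv (cd_deriv hf)) (deriv lam t)
  have D3 : deriv (deriv (deriv (fun z => deriv lam t * deriv (fun s => u t s y) z)))
      = fun z => deriv lam t * deriv (deriv (deriv (deriv (fun s => u t s y)))) z := by
    rw [D2]; exact deriv_cmul (cd_deriv (cd_deriv (cd_deriv hf))) (deriv lam t)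
  constructor
  · -- first equation
    have eW : ∀ a : ℝ, px (fun s a b => pt u s a b + deriv lam s * px u s a b) t a y
        = deriv (fun z => pt u t z y + deriv lam t * deriv (fun s => u t s y) z) a :=
      px_sect (fun _ => rfl)
    show px (fun s a b => pt u s a b + deriv lam s * px u s a b) t x y
      - px (px (px (fun s a b => pt u s a b + deriv lam s * px u s a b))) t x y = 0
    rw [eW x, px_sect (px_sect eW) x, congrFun E1 x, congrFun E3 x]
    linarith [key x]
  · -- second equation
    have eV : ∀ a : ℝ, px (fun s a b => deriv lam s * px u s a b) t a y
        = deriv (fun z => deriv lam t * deriv (fun s => u t s y) z) a :=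
      px_sect (fun _ => rfl)
    have hLV : Lx (fun s a b => deriv lam s * px u s a b) t x y
        = deriv lam t * deriv (deriv (fun s => u t s y)) x
          - deriv lam t * deriv (deriv (deriv (deriv (fun s => u t s y)))) x := by
      show px (fun s a b => deriv lam s * px u s a b) t x y
        - px (px (px (fun s a b => deriv lam s * px u s a b))) t x y = _
      rw [eV x, px_sect (px_sect eV) x, congrFun D1 x, congrFun D3 x]
    rw [hLV, epx2 x, eN x]
    linarith [key x, heqn x]
end
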